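/- arXiv:2003.05826 — 2 statements merged into one kernel-verified Lean document; each statement's English description precedes it below -/
import Mathlib

section
/- Let n ∈ ℕ and let 𝒞 be a family of subsets of [n] = {1, 2, …, n} with |𝒞| > n. Then there exists a set A ∈ 𝒞 such that A ⊆ ⋃_{B ∈ 𝒞, B ≠ A} B. -/
/-!
If no member of `𝒞` were covered by the others, each `A ∈ 𝒞` would own a private point lying in
no other member. Distinct members own distinct private points, so `|𝒞| ≤ n`.
-/

open Finset

variable {α : Type*} [DecidableEq α]

theorem Finset.exists_mem_forall_notMem_of_not_subset_biUnion_erase {C : Finset (Finset α)}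
    {A : Finset α} (hA : ¬A ⊆ (C.erase A).biUnion id) :
    ∃ x ∈ A, ∀ B ∈ C, B ≠ A → x ∉ B := by
  obtain ⟨x, hxA, hx⟩ := not_subset.mp hA
  exact ⟨x, hxA, fun B hB hBA hxB => hx (mem_biUnion.mpr ⟨B, mem_erase.mpr ⟨hBA, hB⟩, hxB⟩)⟩

theorem Finset.card_le_card_biUnion_of_forall_not_subset_biUnion_erase
    {C : Finset (Finset α)} (hC : ∀ A ∈ C, ¬A ⊆ (C.erase A).biUnion id) :
    #C ≤ #(C.biUnion id) := by
  choose f hfA hf using fun A : C =>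
    exists_mem_forall_notMem_of_not_subset_biUnion_erase (hC A A.2)
  rw [← card_attach]
  refine card_le_card_of_injOn f (fun A _ => mem_biUnion.mpr ⟨A, A.2, hfA A⟩) ?_
  intro A _ B _ hAB
  by_contra hne
  exact hf B A A.2 (fun h => hne (Subtype.ext h)) (hAB ▸ hfA A)

/-- If `𝒞` is a family of subsets of `[n]` with `|𝒞| > n`, then some
`A ∈ 𝒞` is contained in the union of the other members of `𝒞`. -/
theorem stmt0 (n : ℕ) (C : Finset (Finset (Fin n))) (hC : n < C.card) :
    ∃ A ∈ C, A ⊆ (C.erase A).biUnion id := by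
  by_contra! h
  have hle_union := card_le_card_biUnion_of_forall_not_subset_biUnion_erase h
  have hunion_le : #(C.biUnion id) ≤ n := by
    simpa only [Fintype.card_fin] using (C.biUnion id).card_le_univ
  omega
end

section
/- Let G = (R ∪ B, E) be a red-blue graph and let G* be obtained from G by applying a color-preserving merge operation to two arbitrary vertices v and v' of the same color. If G contains a red-blue dominating set of size at most k, then G* also contains a red-blue dominating set of size at most k. -/
/-- A red-blue graph: fixed color classes of red and blue vertices (each named by
natural numbers) and edges, each joining a red vertex (first component) and a blue
vertex (second component). -/
structure RBGraph where
  R : Finset ℕ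
  B : Finset ℕ
  E : Finset (ℕ × ℕ)

/-- `G` has a red-blue dominating set of size at most `k`: a set of at most `k` red
vertices such that every blue vertex has a neighbor in it. -/
def HasRBDS (G : RBGraph) (k : ℕ) : Prop :=
  ∃ S : Finset ℕ, S ⊆ G.R ∧ S.card ≤ k ∧ ∀ b ∈ G.B, ∃ r ∈ S, (r, b) ∈ G.E

/-- Merging the red vertices `v, v'` into the new red vertex `x`. -/
def redMerge (G : RBGraph) (v v' x : ℕ) : RBGraph where
  R := insert x ((G.R.erase v).erase v')
  B := G.B
  E := G.E.image (fun e => (if e.1 = v ∨ e.1 = v' then x else e.1, e.2))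

/-- Merging the blue vertices `v, v'` into the new blue vertex `x`. -/
def blueMerge (G : RBGraph) (v v' x : ℕ) : RBGraph where
  R := G.R
  B := insert x ((G.B.erase v).erase v')
  E := G.E.image (fun e => (e.1, if e.2 = v ∨ e.2 = v' then x else e.2))

/-- A single color-preserving merge operation on two vertices of the same color
(the new vertex is fresh). -/
def RBMergeStep (G G' : RBGraph) : Prop :=
  (∃ v v' x : ℕ, v ∈ G.R ∧ v' ∈ G.R ∧ x ∉ (G.R.erase v).erase v' ∧
      G' = redMerge G v v' x) ∨
  (∃ v v' x : ℕ, v ∈ G.B ∧ v' ∈ G.B ∧ x ∉ (G.B.erase v).erase v' ∧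
      G' = blueMerge G v v' x)

/-- The image of a dominating set under the merge map `r ↦ if r = v ∨ r = v' then x else r`
dominates the merged graph and is no larger. -/
theorem HasRBDS.redMerge {G : RBGraph} {k : ℕ} (h : HasRBDS G k) (v v' x : ℕ) :
    HasRBDS (redMerge G v v' x) k := by
  obtain ⟨S, hSR, hSk, hdom⟩ := h
  let f : ℕ → ℕ := fun r => if r = v ∨ r = v' then x else r
  refine ⟨S.image f, ?_, (Finset.card_image_le).trans hSk, fun b hb => ?_⟩
  · intro s hs
    obtain ⟨r, hrS, rfl⟩ := Finset.mem_image.1 hs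
    change f r ∈ insert x ((G.R.erase v).erase v')
    by_cases hr : r = v ∨ r = v'
    · simp [f, hr]
    · obtain ⟨hrv, hrv'⟩ := not_or.1 hr
      simp [f, hrv, hrv', hSR hrS]
  · obtain ⟨r, hrS, hrE⟩ := hdom b hb
    exact ⟨f r, Finset.mem_image_of_mem f hrS,
      Finset.mem_image.2 ⟨(r, b), hrE, rfl⟩⟩

theorem HasRBDS.blueMerge {G : RBGraph} {k : ℕ} (h : HasRBDS G k) {v : ℕ} (hv : v ∈ G.B)
    (v' x : ℕ) : HasRBDS (blueMerge G v v' x) k := by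
  obtain ⟨S, hSR, hSk, hdom⟩ := h
  refine ⟨S, hSR, hSk, fun b hb => ?_⟩
  change b ∈ insert x ((G.B.erase v).erase v') at hb
  simp only [Finset.mem_insert, Finset.mem_erase] at hb
  rcases hb with rfl | ⟨hbv', hbv, hbB⟩
  · obtain ⟨r, hrS, hrE⟩ := hdom v hv
    exact ⟨r, hrS, Finset.mem_image.2 ⟨(r, v), hrE, by simp⟩⟩
  · obtain ⟨r, hrS, hrE⟩ := hdom b hbB
    exact ⟨r, hrS, Finset.mem_image.2 ⟨(r, b), hrE, by simp [hbv, hbv']⟩⟩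

theorem stmt17_general (G : RBGraph)
    (Gstar : RBGraph) (hmerge : RBMergeStep G Gstar) (k : ℕ)
    (h : HasRBDS G k) : HasRBDS Gstar k := by
  rcases hmerge with ⟨v, v', x, -, -, -, rfl⟩ | ⟨v, v', x, hv, -, -, rfl⟩
  · exact h.redMerge v v' x
  · exact h.blueMerge hv v' x

/-- If `G*` is obtained from the red-blue graph `G` by a
color-preserving merge operation on two vertices of the same color and `G` has a
red-blue dominating set of size at most `k`, then so does `G*`. -/
theorem stmt17 (G : RBGraph) (hwf : ∀ e ∈ G.E, e.1 ∈ G.R ∧ e.2 ∈ G.B)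
    (Gstar : RBGraph) (hmerge : RBMergeStep G Gstar) (k : ℕ)
    (h : HasRBDS G k) : HasRBDS Gstar k :=
  stmt17_general G Gstar hmerge k h
end
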